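/- A point (s,u) is a singular point of the GNR-surface F, i.e. ∂F/∂s(s,u) × ∂F/∂u(s,u) = 0, if and only if f(s) = 0 and g(s,u) = 0. -/

import Mathlib

open Matrix
open scoped Matrix

private lemma bac_cab (a b c : Fin 3 → ℝ) :
    a ⨯₃ (b ⨯₃ c) = (a ⬝ᵥ c) • b - (a ⬝ᵥ b) • c := by
  ext i
  fin_cases i <;>
    simp [cross_apply, dotProduct, Fin.sum_univ_three] <;> ring

theorem stmt_1
    (α T N B : ℝ → Fin 3 → ℝ) (κ τ a₁ a₂ : ℝ → ℝ)
    (hαs : ContDiff ℝ (⊤ : ℕ∞) α) (hTs : ContDiff ℝ (⊤ : ℕ∞) T) (hNs : ContDiff ℝ (⊤ : ℕ∞) N)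
    (hBs : ContDiff ℝ (⊤ : ℕ∞) B) (hκs : ContDiff ℝ (⊤ : ℕ∞) κ) (hτs : ContDiff ℝ (⊤ : ℕ∞) τ)
    (ha₁s : ContDiff ℝ (⊤ : ℕ∞) a₁) (ha₂s : ContDiff ℝ (⊤ : ℕ∞) a₂)
    (hαT : ∀ s, T s = deriv α s)
    (hTT : ∀ s, T s ⬝ᵥ T s = 1) (hNN : ∀ s, N s ⬝ᵥ N s = 1) (hBB : ∀ s, B s ⬝ᵥ B s = 1)
    (hTN : ∀ s, T s ⬝ᵥ N s = 0) (hTB : ∀ s, T s ⬝ᵥ B s = 0) (hNB : ∀ s, N s ⬝ᵥ B s = 0)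
    (hBTN : ∀ s, B s = T s ⨯₃ N s)
    (hT' : ∀ s, deriv T s = κ s • N s)
    (hN' : ∀ s, deriv N s = (-κ s) • T s + τ s • B s)
    (hB' : ∀ s, deriv B s = (-τ s) • N s)
    (hcircle : ∀ s, a₁ s ^ 2 + a₂ s ^ 2 = 1)
    (q_n : ℝ → Fin 3 → ℝ) (hq : ∀ s, q_n s = a₁ s • N s + a₂ s • B s)
    (F : ℝ → ℝ → Fin 3 → ℝ) (hF : ∀ s u, F s u = α s + u • q_n s)
    (f : ℝ → ℝ) (hf : ∀ s, f s = deriv a₁ s * a₂ s - a₁ s * deriv a₂ s - τ s)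
    (g : ℝ → ℝ → ℝ) (hg : ∀ s u, g s u = 1 - u * a₁ s * κ s) :
    ∀ s u, (deriv (fun t => F t u) s ⨯₃ deriv (F s) u = 0) ↔ (f s = 0 ∧ g s u = 0) := by
  intro s u
  -- the u-derivative is q_n s
  have hFu : deriv (F s) u = q_n s := by
    have h1 : HasDerivAt (fun v : ℝ => α s + v • q_n s) ((1 : ℝ) • q_n s) u :=
      ((hasDerivAt_id u).smul_const (q_n s)).const_add (α s)
    have h2 : (fun v : ℝ => α s + v • q_n s) = F s := by
      funext v; rw [hF]
    rw [h2] at h1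
    simpa using h1.deriv
  -- the s-derivative
  have hα1 : HasDerivAt α (T s) s := by
    rw [hαT]; exact (hαs.differentiable (by simp) s).hasDerivAt
  have hN1 : HasDerivAt N (deriv N s) s := (hNs.differentiable (by simp) s).hasDerivAt
  have hB1 : HasDerivAt B (deriv B s) s := (hBs.differentiable (by simp) s).hasDerivAt
  have hA1 : HasDerivAt a₁ (deriv a₁ s) s := (ha₁s.differentiable (by simp) s).hasDerivAt
  have hA2 : HasDerivAt a₂ (deriv a₂ s) s := (ha₂s.differentiable (by simp) s).hasDerivAt
  have hq_n : HasDerivAt q_n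
      ((a₁ s • deriv N s + deriv a₁ s • N s) + (a₂ s • deriv B s + deriv a₂ s • B s)) s := by
    have : (fun t => a₁ t • N t + a₂ t • B t) = q_n := by funext t; rw [hq]
    rw [← this]
    exact (hA1.smul hN1).add (hA2.smul hB1)
  have hFs : HasDerivAt (fun t => F t u)
      (T s + u • ((a₁ s • deriv N s + deriv a₁ s • N s) + (a₂ s • deriv B s + deriv a₂ s • B s))) s := by
    have : (fun t => α t + u • q_n t) = (fun t => F t u) := by funext t; rw [hF]
    rw [← this]
    exact hα1.add (hq_n.const_smul u)
  have hD : deriv (fun t => F t u) s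
      = g s u • T s + (u * (deriv a₁ s - τ s * a₂ s)) • N s
        + (u * (deriv a₂ s + τ s * a₁ s)) • B s := by
    rw [hFs.deriv, hN', hB', hg]
    module
  -- cross product relations in the Frenet frame
  have hTNc : T s ⨯₃ N s = B s := (hBTN s).symm
  have hNBc : N s ⨯₃ B s = T s := by
    rw [hBTN s, bac_cab, hNN s, dotProduct_comm, hTN s]; simp
  have hBTc : B s ⨯₃ T s = N s := by
    rw [hBTN s, ← cross_anticomm, bac_cab, hTN s, hTT s]; simp
  have hTBc : T s ⨯₃ B s = -N s := by rw [← cross_anticomm, hBTc]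
  have hBNc : B s ⨯₃ N s = -T s := by rw [← cross_anticomm, hNBc]
  have hcross : deriv (fun t => F t u) s ⨯₃ deriv (F s) u
      = (u * f s) • T s + (-(g s u * a₂ s)) • N s + (g s u * a₁ s) • B s := by
    rw [hFu, hD, hq s, hf s]
    simp only [map_add, _root_.map_smul, LinearMap.add_apply, LinearMap.smul_apply,
      hTNc, hNBc, hBTc, hTBc, hBNc, cross_self, smul_zero, smul_neg]
    match_scalars
    · ring
    · linear_combination (-(u * τ s)) * hcircle s
    · ring
  -- dot products with the frame
  have hNT0 : N s ⬝ᵥ T s = 0 := by rw [dotProduct_comm]; exact hTN s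
  have hBT0 : B s ⬝ᵥ T s = 0 := by rw [dotProduct_comm]; exact hTB s
  have hBN0 : B s ⬝ᵥ N s = 0 := by rw [dotProduct_comm]; exact hNB s
  constructor
  · intro h
    rw [hcross] at h
    have e1 : u * f s = 0 := by
      have := congrArg (fun v => v ⬝ᵥ T s) h
      simpa [add_dotProduct, smul_dotProduct, hTT s, hNT0, hBT0] using this
    have e2 : g s u * a₂ s = 0 := by
      have := congrArg (fun v => v ⬝ᵥ N s) h
      simpa [add_dotProduct, smul_dotProduct, hNN s, hTN s, hBN0] using this
    have e3 : g s u * a₁ s = 0 := by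
      have := congrArg (fun v => v ⬝ᵥ B s) h
      simpa [add_dotProduct, smul_dotProduct, hBB s, hTB s, hNB s] using this
    have hgz : g s u = 0 := by
      have h1 : g s u * (a₁ s ^ 2 + a₂ s ^ 2) = 0 := by
        have hrw : g s u * (a₁ s ^ 2 + a₂ s ^ 2)
            = a₁ s * (g s u * a₁ s) + a₂ s * (g s u * a₂ s) := by ring
        rw [hrw, e2, e3]; ring
      simpa [hcircle s] using h1
    have hfz : f s = 0 := by
      rcases mul_eq_zero.mp e1 with h0 | h0
      · exfalso
        rw [hg, h0] at hgz
        simp at hgz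
      · exact h0
    exact ⟨hfz, hgz⟩
  · rintro ⟨hf0, hg0⟩
    rw [hcross, hf0, hg0]
    simp
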